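/- arXiv:1605.00501 — 10 statements merged into one kernel-verified Lean document; each statement's English description precedes it below -/
import Mathlib

section
/- Let n ≥ 3 and let a, b be coprime integers with a > 0 and b ≠ 0. If the polynomial x^3 + b·x + a^n splits into linear factors over ℚ, then there exist positive integers p, q, r, pairwise coprime, with a = p·q·r and p^n + q^n = r^n. -/
/-!
By Vieta, the roots of X³ + bX + aⁿ satisfy x + y + z = 0, xy + xz + yz = b and xyz = -aⁿ; they
are integers because ℤ is integrally closed. Since the roots sum to zero and their product is
negative, two of them, u and v, are positive and the third is -(u + v), so uv(u + v) = aⁿ.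
A common divisor of u and v divides both aⁿ and b, so u, v and u + v are pairwise coprime;
hence each is an n-th power, u = pⁿ, v = qⁿ, u + v = rⁿ, and a = pqr.
-/

open Polynomial

theorem exists_vieta_of_splits_depressed_cubic {K : Type*} [Field K] {p q : K}
    (h : (X ^ 3 + C p * X + C q).Splits) :
    ∃ x y z : K, x + y + z = 0 ∧ x * y + x * z + y * z = p ∧ x * y * z = -q := by
  let P : Cubic K := ⟨1, 0, p, q⟩
  have hP : P.toPoly.map (RingHom.id K) = X ^ 3 + C p * X + C q := by
    simp [P, Cubic.toPoly]
  obtain ⟨x, y, z, h3⟩ := (Cubic.splits_iff_roots_eq_three one_ne_zero).mp (hP ▸ h)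
  have hb := Cubic.b_eq_three_roots one_ne_zero h3
  have hc := Cubic.c_eq_three_roots one_ne_zero h3
  have hd := Cubic.d_eq_three_roots one_ne_zero h3
  simp only [P, RingHom.id_apply, one_mul] at hb hc hd
  exact ⟨x, y, z, by linear_combination hb, hc.symm, by linear_combination hd⟩

theorem Rat.exists_intCast_eq_of_cubic_eq_zero {r : ℚ} {p q : ℤ}
    (h : r ^ 3 + p * r + q = 0) : ∃ m : ℤ, (m : ℚ) = r := by
  have hr : IsIntegral ℤ r := by
    refine ⟨X ^ 3 + C p * X + C q, by monicity!, ?_⟩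
    simpa only [eval₂_add, eval₂_mul, eval₂_pow, eval₂_X, eval₂_C, algebraMap_int_eq,
      Int.coe_castRingHom] using h
  obtain ⟨m, hm⟩ := IsIntegrallyClosed.isIntegral_iff.mp hr
  exact ⟨m, hm⟩

theorem two_pos_of_add_eq_zero_of_mul_neg {R : Type*} [CommRing R] [LinearOrder R]
    [IsStrictOrderedRing R] {u v w : R} (hsum : u + v + w = 0) (hprod : u * v * w < 0) :
    (0 < u ∧ 0 < v) ∨ (0 < u ∧ 0 < w) ∨ (0 < v ∧ 0 < w) := by
  by_contra! ⟨huv, huw, hvw⟩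
  have : 0 ≤ u * v * w := by
    rcases lt_or_ge 0 u with hu | hu
    · nlinarith [mul_nonneg_of_nonpos_of_nonpos (huv hu) (huw hu)]
    rcases lt_or_ge 0 v with hv | hv
    · nlinarith [mul_nonneg_of_nonpos_of_nonpos hu (hvw hv)]
    · nlinarith [mul_nonneg_of_nonpos_of_nonpos hu hv]
  exact this.not_gt hprod

theorem IsCoprime.of_isCoprime_mul_mul_esymm_two {R : Type*} [CommRing R] {x y z : R}
    (h : IsCoprime (x * y * z) (x * y + x * z + y * z)) : IsCoprime x y := by
  -- modulo x, the second elementary symmetric function is y z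
  have hx : IsCoprime x (y * z + x * (y + z)) := by
    rw [mul_assoc] at h
    convert h.of_mul_left_left using 1; ring
  exact hx.of_add_mul_left_right.of_mul_right_left

theorem Nat.exists_pow_eq_of_coprime_of_mul_mul_eq_pow {x y z A n : ℕ} (hn : n ≠ 0)
    (hxy : x.Coprime y) (hxz : x.Coprime z) (hyz : y.Coprime z) (h : x * y * z = A ^ n) :
    ∃ p q r : ℕ, x = p ^ n ∧ y = q ^ n ∧ z = r ^ n ∧ A = p * q * r := by
  obtain ⟨p, hp⟩ := exists_eq_pow_of_mul_eq_pow (Nat.isUnit_iff.mpr (hxy.mul_right hxz))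
    (by rw [← mul_assoc, h])
  obtain ⟨q, hq⟩ := exists_eq_pow_of_mul_eq_pow (Nat.isUnit_iff.mpr (hxy.symm.mul_right hyz))
    (by rw [← h]; ring)
  obtain ⟨r, hr⟩ := exists_eq_pow_of_mul_eq_pow
    (Nat.isUnit_iff.mpr (hxz.symm.mul_right hyz.symm)) (by rw [← h]; ring)
  refine ⟨p, q, r, hp, hq, hr, Nat.pow_left_injective hn ?_⟩
  simp only [mul_pow, ← hp, ← hq, ← hr, h]

theorem Nat.exists_fermat_triple_of_mul_mul_add_eq_pow {U V A n : ℕ} (hn : n ≠ 0)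
    (hU : 0 < U) (hV : 0 < V) (hUV : U.Coprime V) (h : U * V * (U + V) = A ^ n) :
    ∃ p q r : ℕ, 0 < p ∧ 0 < q ∧ 0 < r ∧ p.Coprime q ∧ p.Coprime r ∧ q.Coprime r ∧
      A = p * q * r ∧ p ^ n + q ^ n = r ^ n := by
  have hUW : U.Coprime (U + V) := by simpa using hUV
  have hVW : V.Coprime (U + V) := by simpa using hUV.symm
  obtain ⟨p, q, r, rfl, rfl, hr, rfl⟩ :=
    exists_pow_eq_of_coprime_of_mul_mul_eq_pow hn hUV hUW hVW h
  rw [hr] at hUW hVW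
  have hn' : 0 < n := Nat.pos_of_ne_zero hn
  simp only [Nat.coprime_pow_left_iff hn', Nat.coprime_pow_right_iff hn'] at hUV hUW hVW
  exact ⟨p, q, r, (pow_pos_iff hn).mp hU, (pow_pos_iff hn).mp hV,
    (pow_pos_iff hn).mp (hr ▸ Nat.add_pos_left hU _), hUV, hUW, hVW, rfl, hr⟩

theorem exists_fermat_triple_of_vieta_of_pos {n : ℕ} (hn : n ≠ 0) {a b u v w : ℤ}
    (ha : 0 ≤ a) (hab : IsCoprime a b) (hu : 0 < u) (hv : 0 < v) (hsum : u + v + w = 0)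
    (he2 : u * v + u * w + v * w = b) (he3 : u * v * w = -a ^ n) :
    ∃ p q r : ℕ, 0 < p ∧ 0 < q ∧ 0 < r ∧ p.Coprime q ∧ p.Coprime r ∧ q.Coprime r ∧
      a = (p : ℤ) * q * r ∧ p ^ n + q ^ n = r ^ n := by
  have huv : IsCoprime u v :=
    IsCoprime.of_isCoprime_mul_mul_esymm_two (by rw [he3, he2]; exact hab.pow_left.neg_left)
  have hprod : u * v * (u + v) = a ^ n := by
    linear_combination -he3 + u * v * hsum
  lift u to ℕ using hu.le
  lift v to ℕ using hv.le
  lift a to ℕ using ha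
  obtain ⟨p, q, r, hp, hq, hr, hpq, hpr, hqr, rfl, hfermat⟩ :=
    Nat.exists_fermat_triple_of_mul_mul_add_eq_pow hn (by exact_mod_cast hu)
      (by exact_mod_cast hv) (Nat.isCoprime_iff_coprime.mp huv) (by exact_mod_cast hprod)
  exact ⟨p, q, r, hp, hq, hr, hpq, hpr, hqr, by push_cast; rfl, hfermat⟩

theorem exists_fermat_triple_of_vieta {n : ℕ} (hn : n ≠ 0) {a b u v w : ℤ} (ha : 0 < a)
    (hab : IsCoprime a b) (hsum : u + v + w = 0)
    (he2 : u * v + u * w + v * w = b) (he3 : u * v * w = -a ^ n) :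
    ∃ p q r : ℕ, 0 < p ∧ 0 < q ∧ 0 < r ∧ p.Coprime q ∧ p.Coprime r ∧ q.Coprime r ∧
      a = (p : ℤ) * q * r ∧ p ^ n + q ^ n = r ^ n := by
  have hneg : u * v * w < 0 := he3 ▸ neg_neg_of_pos (pow_pos ha n)
  rcases two_pos_of_add_eq_zero_of_mul_neg hsum hneg with ⟨hu, hv⟩ | ⟨hu, hw⟩ | ⟨hv, hw⟩
  · exact exists_fermat_triple_of_vieta_of_pos hn ha.le hab hu hv hsum he2 he3
  · exact exists_fermat_triple_of_vieta_of_pos (w := v) hn ha.le hab hu hw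
      (by linear_combination hsum) (by linear_combination he2) (by linear_combination he3)
  · exact exists_fermat_triple_of_vieta_of_pos (w := u) hn ha.le hab hv hw
      (by linear_combination hsum) (by linear_combination he2) (by linear_combination he3)

theorem stmt_0_general (n : ℕ) (hn : 3 ≤ n) (a b : ℤ) (ha : 0 < a)
    (hab : Int.gcd a b = 1)
    (hsplit : Polynomial.Splits
      ((X ^ 3 + C (b : ℚ) * X + C ((a : ℚ) ^ n)).map (RingHom.id ℚ))) :
    ∃ p q r : ℕ, 0 < p ∧ 0 < q ∧ 0 < r ∧
      Nat.Coprime p q ∧ Nat.Coprime p r ∧ Nat.Coprime q r ∧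
      a = (p : ℤ) * q * r ∧ p ^ n + q ^ n = r ^ n := by
  rw [Polynomial.map_id] at hsplit
  obtain ⟨x, y, z, h1, h2, h3⟩ := exists_vieta_of_splits_depressed_cubic hsplit
  -- each root t satisfies t³ + b t + aⁿ = (t - x)(t - y)(t - z) = 0, so it is an integer
  obtain ⟨u, rfl⟩ := Rat.exists_intCast_eq_of_cubic_eq_zero (r := x) (p := b) (q := a ^ n)
    (by push_cast; linear_combination x ^ 2 * h1 - x * h2 + h3)
  obtain ⟨v, rfl⟩ := Rat.exists_intCast_eq_of_cubic_eq_zero (r := y) (p := b) (q := a ^ n)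
    (by push_cast; linear_combination y ^ 2 * h1 - y * h2 + h3)
  obtain ⟨w, rfl⟩ := Rat.exists_intCast_eq_of_cubic_eq_zero (r := z) (p := b) (q := a ^ n)
    (by push_cast; linear_combination z ^ 2 * h1 - z * h2 + h3)
  exact exists_fermat_triple_of_vieta (by omega) ha (Int.isCoprime_iff_gcd_eq_one.mpr hab)
    (by exact_mod_cast h1) (by exact_mod_cast h2) (by exact_mod_cast h3)

theorem stmt_0 (n : ℕ) (hn : 3 ≤ n) (a b : ℤ) (ha : 0 < a) (hb : b ≠ 0)
    (hab : Int.gcd a b = 1)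
    (hsplit : Polynomial.Splits
      ((X ^ 3 + C (b : ℚ) * X + C ((a : ℚ) ^ n)).map (RingHom.id ℚ))) :
    ∃ p q r : ℕ, 0 < p ∧ 0 < q ∧ 0 < r ∧
      Nat.Coprime p q ∧ Nat.Coprime p r ∧ Nat.Coprime q r ∧
      a = (p : ℤ) * q * r ∧ p ^ n + q ^ n = r ^ n :=
  stmt_0_general n hn a b ha hab hsplit
end

section
/- Let n be a positive integer and suppose p, q, r are pairwise coprime positive integers satisfying p^n + q^n = r^n. Then the polynomial (x - p^n)(x - q^n)(x + r^n) has the form x^3 + b·x + a^n where a = p·q·r, b ≠ 0, and gcd(a, b) = 1. -/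
/-!
With `A = pⁿ`, `B = qⁿ`, `C = rⁿ` and `A + B = C`, the linear coefficient `AB - AC - BC` is congruent
to `-BC`, `-AC`, `AB` modulo `A`, `B`, `C` respectively, hence coprime to `ABC = (pqr)ⁿ` and so to
`pqr`; it is nonzero because it equals `-(A² + AB + B²)`, a definite quadratic form.
-/

open Polynomial

section CommRing

variable {R : Type*} [CommRing R] {a b c : R}

theorem X_sub_C_mul_X_sub_C_mul_X_add_C_of_add_eq (h : a + b = c) :
    (X - C a) * (X - C b) * (X + C c) =
      X ^ 3 + C (a * b - a * c - b * c) * X + C (a * b * c) := by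
  subst h
  simp only [map_add, map_sub, map_mul]
  ring

theorem IsCoprime.mul_mul_mul_sub_mul_sub_mul (hab : IsCoprime a b) (hac : IsCoprime a c)
    (hbc : IsCoprime b c) : IsCoprime (a * b * c) (a * b - a * c - b * c) := by
  have ha : IsCoprime a (a * b - a * c - b * c) := by
    rw [show a * b - a * c - b * c = -(b * c) + a * (b - c) by ring,
      IsCoprime.add_mul_left_right_iff, IsCoprime.neg_right_iff]
    exact hab.mul_right hac
  have hb : IsCoprime b (a * b - a * c - b * c) := by
    rw [show a * b - a * c - b * c = -(a * c) + b * (a - c) by ring,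
      IsCoprime.add_mul_left_right_iff, IsCoprime.neg_right_iff]
    exact hab.symm.mul_right hbc
  have hc : IsCoprime c (a * b - a * c - b * c) := by
    rw [show a * b - a * c - b * c = a * b + c * (-(a + b)) by ring,
      IsCoprime.add_mul_left_right_iff]
    exact hac.symm.mul_right hbc.symm
  exact (ha.mul_left hb).mul_left hc

end CommRing

section OrderedRing

variable {R : Type*} [CommRing R] [LinearOrder R] [IsStrictOrderedRing R] {a b c : R}

theorem sq_add_mul_add_sq_pos (ha : a ≠ 0) : 0 < a ^ 2 + a * b + b ^ 2 := by
  nlinarith [sq_pos_of_ne_zero ha, sq_nonneg (a + 2 * b)]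

theorem mul_sub_mul_sub_mul_ne_zero_of_add_eq (ha : a ≠ 0) (h : a + b = c) :
    a * b - a * c - b * c ≠ 0 := by
  rw [show a * b - a * c - b * c = -(a ^ 2 + a * b + b ^ 2) by subst h; ring, neg_ne_zero]
  exact (sq_add_mul_add_sq_pos ha).ne'

end OrderedRing

theorem stmt_1_general (n : ℕ) (hn : 1 ≤ n) (p q r : ℕ)
    (hp : 0 < p)
    (hpq : Nat.Coprime p q) (hpr : Nat.Coprime p r) (hqr : Nat.Coprime q r)
    (hfermat : p ^ n + q ^ n = r ^ n) :
    ∃ b : ℤ,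
      (X - C ((p : ℤ) ^ n)) * (X - C ((q : ℤ) ^ n)) * (X + C ((r : ℤ) ^ n)) =
        X ^ 3 + C b * X + C (((p : ℤ) * q * r) ^ n) ∧
      b = (p : ℤ) ^ n * q ^ n - (p : ℤ) ^ n * r ^ n - (q : ℤ) ^ n * r ^ n ∧
      b ≠ 0 ∧
      Int.gcd ((p : ℤ) * q * r) b = 1 := by
  have hfermat' : (p : ℤ) ^ n + (q : ℤ) ^ n = (r : ℤ) ^ n := by exact_mod_cast hfermat
  have hcop {x y : ℕ} (h : x.Coprime y) : IsCoprime ((x : ℤ) ^ n) ((y : ℤ) ^ n) :=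
    (Nat.isCoprime_iff_coprime.2 h).pow
  refine ⟨_, ?_, rfl, mul_sub_mul_sub_mul_ne_zero_of_add_eq (by positivity) hfermat', ?_⟩
  · rw [mul_pow, mul_pow]
    exact X_sub_C_mul_X_sub_C_mul_X_add_C_of_add_eq hfermat'
  · rw [← Int.isCoprime_iff_gcd_eq_one, ← IsCoprime.pow_left_iff hn, mul_pow, mul_pow]
    exact (hcop hpq).mul_mul_mul_sub_mul_sub_mul (hcop hpr) (hcop hqr)

theorem stmt_1 (n : ℕ) (hn : 1 ≤ n) (p q r : ℕ)
    (hp : 0 < p) (hq : 0 < q) (hr : 0 < r)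
    (hpq : Nat.Coprime p q) (hpr : Nat.Coprime p r) (hqr : Nat.Coprime q r)
    (hfermat : p ^ n + q ^ n = r ^ n) :
    ∃ b : ℤ,
      (X - C ((p : ℤ) ^ n)) * (X - C ((q : ℤ) ^ n)) * (X + C ((r : ℤ) ^ n)) =
        X ^ 3 + C b * X + C (((p : ℤ) * q * r) ^ n) ∧
      b = (p : ℤ) ^ n * q ^ n - (p : ℤ) ^ n * r ^ n - (q : ℤ) ^ n * r ^ n ∧
      b ≠ 0 ∧
      Int.gcd ((p : ℤ) * q * r) b = 1 :=
  stmt_1_general n hn p q r hp hpq hpr hqr hfermat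
end

section
/- Suppose a, b, a', b' are positive integers with gcd(a,b) = gcd(a',b') = 1, a·b = a'·b', and a·b is odd. Then for every n ≥ 1, a^n + b^n ≠ a'^n - b'^n. -/
/-!
For odd `x, y` the products `(xⁿ - 1)(yⁿ - 1)` and `(xⁿ - 1)(yⁿ + 1)` are divisible by 4, so
`xⁿ + yⁿ ≡ 1 + (xy)ⁿ` and `xⁿ - yⁿ ≡ 1 - (xy)ⁿ` modulo 4. With `P = ab = a'b'` the equation
would give `1 + Pⁿ ≡ 1 - Pⁿ`, i.e. `4 ∣ 2Pⁿ`, impossible for odd `P`.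
-/

namespace Int

theorem four_dvd_mul_of_even {u v : ℤ} (hu : Even u) (hv : Even v) : 4 ∣ u * v :=
  mul_dvd_mul hu.two_dvd hv.two_dvd

variable {x y : ℤ}

theorem pow_add_pow_modEq_one_add_mul_pow (hx : Odd x) (hy : Odd y) (n : ℕ) :
    x ^ n + y ^ n ≡ 1 + (x * y) ^ n [ZMOD 4] := by
  rw [Int.modEq_iff_dvd]
  have h4 := four_dvd_mul_of_even ((hx.pow (n := n)).sub_odd odd_one)
    ((hy.pow (n := n)).sub_odd odd_one)
  have hdiff : 1 + (x * y) ^ n - (x ^ n + y ^ n) = (x ^ n - 1) * (y ^ n - 1) := by ring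
  rwa [hdiff]

theorem pow_sub_pow_modEq_one_sub_mul_pow (hx : Odd x) (hy : Odd y) (n : ℕ) :
    x ^ n - y ^ n ≡ 1 - (x * y) ^ n [ZMOD 4] := by
  rw [Int.modEq_iff_dvd]
  have h4 := four_dvd_mul_of_even ((hx.pow (n := n)).sub_odd odd_one)
    ((hy.pow (n := n)).add_odd odd_one)
  have hdiff : 1 - (x * y) ^ n - (x ^ n - y ^ n) = -((x ^ n - 1) * (y ^ n + 1)) := by ring
  rwa [hdiff, dvd_neg]

theorem not_one_add_modEq_one_sub_of_odd (hx : Odd x) : ¬1 + x ≡ 1 - x [ZMOD 4] := by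
  intro h
  obtain ⟨c, hc⟩ := Int.modEq_iff_dvd.mp h.symm
  exact Int.not_even_iff_odd.mpr hx ⟨c, by linarith⟩

end Int

theorem stmt_3_general (a b a' b' : ℕ)
    (hprod : a * b = a' * b') (hodd : Odd (a * b)) :
    ∀ n : ℕ, 1 ≤ n → (a : ℤ) ^ n + (b : ℤ) ^ n ≠ (a' : ℤ) ^ n - (b' : ℤ) ^ n := by
  intro n _ heq
  have hP : Odd ((a : ℤ) * b) := by exact_mod_cast hodd
  have hP' : Odd ((a' : ℤ) * b') := by exact_mod_cast hprod ▸ hodd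
  have hprodℤ : (a' : ℤ) * b' = a * b := by exact_mod_cast hprod.symm
  obtain ⟨ha, hb⟩ := Int.odd_mul.mp hP
  obtain ⟨ha', hb'⟩ := Int.odd_mul.mp hP'
  refine Int.not_one_add_modEq_one_sub_of_odd (hP.pow (n := n)) ?_
  calc 1 + ((a : ℤ) * b) ^ n ≡ (a : ℤ) ^ n + (b : ℤ) ^ n [ZMOD 4] :=
        (Int.pow_add_pow_modEq_one_add_mul_pow ha hb n).symm
    _ = (a' : ℤ) ^ n - (b' : ℤ) ^ n := heq
    _ ≡ 1 - ((a' : ℤ) * b') ^ n [ZMOD 4] := Int.pow_sub_pow_modEq_one_sub_mul_pow ha' hb' n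
    _ = 1 - ((a : ℤ) * b) ^ n := by rw [hprodℤ]

theorem stmt_3 (a b a' b' : ℕ) (ha : 0 < a) (hb : 0 < b) (ha' : 0 < a') (hb' : 0 < b')
    (hcop : Nat.gcd a b = 1) (hcop' : Nat.gcd a' b' = 1)
    (hprod : a * b = a' * b') (hodd : Odd (a * b)) :
    ∀ n : ℕ, 1 ≤ n → (a : ℤ) ^ n + (b : ℤ) ^ n ≠ (a' : ℤ) ^ n - (b' : ℤ) ^ n :=
  stmt_3_general a b a' b' hprod hodd
end

section
/- Assume Fermat's Last Theorem. Then for n ≥ 2, the system of equations X^n + Y^n = X'^n - Y'^n and X·Y = X'·Y', with X, Y coprime and X', Y' coprime, has no solution in positive integers. -/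
/-!
Since `XY = X'Y'` with both pairs coprime, `X = pq`, `Y = rs`, `X' = pr`, `Y' = qs`, and the
equation becomes `qⁿ(pⁿ + sⁿ) = rⁿ(pⁿ - sⁿ)`. Coprimality forces `pⁿ + sⁿ = t rⁿ` and
`pⁿ - sⁿ = t qⁿ` with `t ∣ 2`, and either value of `t` yields `uⁿ + vⁿ = wⁿ` together with
`wⁿ + uⁿ = zⁿ`. For `n ≥ 3` this contradicts Fermat's Last Theorem. For `n = 2` the two
Pythagorean equations give `w⁴ - u⁴ = (vz)²`, which Fermat's descent rules out: the
parametrization of primitive Pythagorean triples turns a primitive solution of `x⁴ - y⁴ = z²`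
into a smaller one, directly if `y` is odd and through `b⁴ + 4a⁴ = x²` if `y` is even.
-/
theorem Nat.Coprime.exists_eq_pow_and_eq_pow {a b c k : ℕ} (hab : a.Coprime b)
    (h : a * b = c ^ k) : ∃ d e, a = d ^ k ∧ b = e ^ k := by
  obtain ⟨d, hd⟩ := exists_eq_pow_of_mul_eq_pow (Nat.isUnit_iff.mpr hab) h
  obtain ⟨e, he⟩ := exists_eq_pow_of_mul_eq_pow (Nat.isUnit_iff.mpr hab.symm)
    ((mul_comm b a).trans h)
  exact ⟨d, e, hd, he⟩

theorem Nat.exists_of_sq_add_sq_eq_sq {a b c : ℕ} (h : a ^ 2 + b ^ 2 = c ^ 2)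
    (hab : a.Coprime b) (ha : Odd a) :
    ∃ m n : ℕ, a + n ^ 2 = m ^ 2 ∧ b = 2 * m * n ∧ c = m ^ 2 + n ^ 2 ∧ m.Coprime n := by
  have hc : 0 < c := Nat.pos_of_ne_zero (by rintro rfl; simp [ha.pos.ne'] at h)
  obtain ⟨m, n, ha', hb', hc', hmn, -, -⟩ := PythagoreanTriple.coprime_classification'
    (x := a) (y := b) (z := c) (by unfold PythagoreanTriple; push_cast [← sq]; exact_mod_cast h)
    (by rwa [Int.gcd_natCast_natCast]) (Int.odd_iff.mp (by exact_mod_cast ha))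
    (by exact_mod_cast hc)
  refine ⟨m.natAbs, n.natAbs, ?_, ?_, ?_, hmn⟩
  · zify; rw [sq_abs, sq_abs]; linarith
  · simpa [Int.natAbs_mul] using congrArg Int.natAbs hb'
  · zify; rwa [sq_abs, sq_abs]

theorem Nat.Coprime.exists_eq_two_mul_sq_and_eq_sq {m n w : ℕ} (hmn : m.Coprime n)
    (h : m * n = 2 * w ^ 2) (hm : Even m) : ∃ a b, m = 2 * a ^ 2 ∧ n = b ^ 2 := by
  obtain ⟨k, rfl⟩ := hm
  obtain ⟨a, b, rfl, rfl⟩ := (hmn.coprime_dvd_left ⟨2, by ring⟩).exists_eq_pow_and_eq_pow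
    (c := w) (k := 2) (by linarith)
  exact ⟨a, b, by ring, rfl⟩

def QuarticDiffSq (x y z : ℕ) : Prop :=
  0 < y ∧ 0 < z ∧ x.Coprime y ∧ y ^ 4 + z ^ 2 = x ^ 4

theorem exists_quarticDiffSq_of_pow_four_add_four_mul_pow_four {a b x : ℕ} (ha : 0 < a)
    (hb : 0 < b) (hab : (b ^ 2).Coprime (2 * a ^ 2)) (h : b ^ 4 + 4 * a ^ 4 = x ^ 2) :
    ∃ e f, e < x ∧ QuarticDiffSq e f b := by
  have hb2 : Odd (b ^ 2) := (hab.coprime_dvd_right ⟨a ^ 2, rfl⟩).odd_of_right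
  obtain ⟨M, N, hM, hN, hx, hMN⟩ :=
    Nat.exists_of_sq_add_sq_eq_sq (by rw [← h]; ring) hab hb2
  obtain ⟨e, f, rfl, rfl⟩ := hMN.exists_eq_pow_and_eq_pow (c := a) (k := 2) (by linarith)
  have hf : 0 < f := Nat.pos_of_ne_zero (by rintro rfl; simp at hN; omega)
  refine ⟨e, f, ?_, hf, by positivity, ?_, by linarith⟩
  · have : e ≤ e ^ 4 := Nat.le_self_pow (by norm_num) e
    have : 0 < f ^ 4 := by positivity
    rw [hx]; ring_nf; omega
  · exact (Nat.coprime_pow_left_iff two_pos _ _).mp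
      ((Nat.coprime_pow_right_iff two_pos _ _).mp hMN)

namespace QuarticDiffSq

variable {x y z : ℕ}

theorem coprime_sq_left (h : QuarticDiffSq x y z) : (y ^ 2).Coprime z := by
  obtain ⟨-, -, hxy, heq⟩ := h
  have : (y ^ 4).Coprime (y ^ 4 + z ^ 2) := by rw [heq]; exact (hxy.pow 4 4).symm
  exact ((Nat.coprime_self_add_right.mp this).coprime_dvd_left ⟨y ^ 2, by ring⟩).coprime_dvd_right
    (dvd_pow_self z two_ne_zero)

theorem exists_lt_of_odd (h : QuarticDiffSq x y z) (hy : Odd y) :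
    ∃ x' y' z', x' < x ∧ QuarticDiffSq x' y' z' := by
  obtain ⟨m, n, hy', rfl, hx, hmn⟩ := Nat.exists_of_sq_add_sq_eq_sq (a := y ^ 2) (c := x ^ 2)
    (by rw [← pow_mul, ← pow_mul]; exact h.2.2.2) h.coprime_sq_left hy.pow
  obtain ⟨hy0, hz0, -, -⟩ := h
  have hn : 0 < n := Nat.pos_of_ne_zero (by rintro rfl; simp at hz0)
  have hmx : m < x := by
    have : 0 < n ^ 2 := by positivity
    exact (Nat.pow_lt_pow_iff_left two_ne_zero).mp (by omega)
  refine ⟨m, n, x * y, hmx, hn, Nat.mul_pos (by omega) hy0, hmn, ?_⟩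
  zify at hy' hx ⊢
  linear_combination (m ^ 2 + n ^ 2 : ℤ) * hy' + (y : ℤ) ^ 2 * hx

theorem exists_lt_of_even (h : QuarticDiffSq x y z) (hy : Even y) :
    ∃ x' y' z', x' < x ∧ QuarticDiffSq x' y' z' := by
  have hy2 : 2 ∣ y ^ 2 := even_iff_two_dvd.mp ((Nat.even_pow' two_ne_zero).mpr hy)
  have hz : Odd z := (h.coprime_sq_left.coprime_dvd_left hy2).odd_of_left
  obtain ⟨m, n, -, hmnw, hx, hmn⟩ := Nat.exists_of_sq_add_sq_eq_sq (a := z) (c := x ^ 2)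
    (by rw [← pow_mul, ← pow_mul, ← h.2.2.2, add_comm]) h.coprime_sq_left.symm hz
  obtain ⟨w, rfl⟩ := hy
  have hw : 0 < w := by have := h.1; omega
  replace hmnw : m * n = 2 * w ^ 2 := by linarith
  wlog hm : Even m generalizing m n
  · have hn : Even n := (Nat.even_mul.mp ⟨w ^ 2, by rw [hmnw]; ring⟩).resolve_left hm
    exact this n m (by rw [hx, add_comm]) hmn.symm (by rw [mul_comm, hmnw]) hn
  obtain ⟨a, b, rfl, rfl⟩ := hmn.exists_eq_two_mul_sq_and_eq_sq hmnw hm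
  have hab : a ≠ 0 ∧ b ≠ 0 := by
    have : 2 * a ^ 2 * b ^ 2 ≠ 0 := by rw [hmnw]; positivity
    simpa using this
  obtain ⟨e, f, hex, hef⟩ := exists_quarticDiffSq_of_pow_four_add_four_mul_pow_four
    (Nat.pos_of_ne_zero hab.1) (Nat.pos_of_ne_zero hab.2) hmn.symm (by rw [hx]; ring)
  exact ⟨e, f, b, hex, hef⟩

theorem exists_lt (h : QuarticDiffSq x y z) : ∃ x' y' z', x' < x ∧ QuarticDiffSq x' y' z' :=
  y.even_or_odd.elim h.exists_lt_of_even h.exists_lt_of_odd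

end QuarticDiffSq

theorem not_quarticDiffSq (x y z : ℕ) : ¬ QuarticDiffSq x y z := by
  induction x using Nat.strong_induction_on generalizing y z with
  | _ x ih =>
    intro h
    obtain ⟨x', y', z', hlt, h'⟩ := h.exists_lt
    exact ih x' hlt y' z' h'

theorem sq_add_sq_ne_of_sq_add_sq_eq {u v w z : ℕ} (hu : 0 < u) (hv : 0 < v) (hwu : w.Coprime u)
    (h : u ^ 2 + v ^ 2 = w ^ 2) : w ^ 2 + u ^ 2 ≠ z ^ 2 := by
  intro h'
  have hz : 0 < z := Nat.pos_of_ne_zero (by rintro rfl; simp at h'; omega)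
  refine not_quarticDiffSq w u (v * z) ⟨hu, by positivity, hwu, ?_⟩
  zify at h h' ⊢
  linear_combination (z : ℤ) ^ 2 * h - (w ^ 2 - u ^ 2 : ℤ) * h'

theorem Nat.exists_mul_eq_of_mul_eq_mul {X Y X' Y' : ℕ} (hXY : X.Coprime Y)
    (hXY' : X'.Coprime Y') (h : X * Y = X' * Y') :
    ∃ p q r s, X = p * q ∧ Y = r * s ∧ X' = p * r ∧ Y' = q * s ∧ q.Coprime r ∧ p.Coprime s := by
  refine ⟨X.gcd X', X.gcd Y', Y.gcd X', Y.gcd Y', ?_, ?_, ?_, ?_, ?_, ?_⟩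
  · exact ((Nat.gcd_mul_gcd_eq_iff_dvd_mul_of_coprime hXY').mpr ⟨Y, h.symm⟩).symm
  · exact ((Nat.gcd_mul_gcd_eq_iff_dvd_mul_of_coprime hXY').mpr ⟨X, by rw [← h, mul_comm]⟩).symm
  · rw [Nat.gcd_comm X, Nat.gcd_comm Y]
    exact ((Nat.gcd_mul_gcd_eq_iff_dvd_mul_of_coprime hXY).mpr ⟨Y', h⟩).symm
  · rw [Nat.gcd_comm X, Nat.gcd_comm Y]
    exact ((Nat.gcd_mul_gcd_eq_iff_dvd_mul_of_coprime hXY).mpr ⟨X', by rw [h, mul_comm]⟩).symm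
  · exact (hXY.coprime_dvd_left (X.gcd_dvd_left _)).coprime_dvd_right (Y.gcd_dvd_left _)
  · exact (hXY'.coprime_dvd_left (X.gcd_dvd_right _)).coprime_dvd_right (Y.gcd_dvd_right _)

theorem Nat.add_eq_of_mul_add_mul_add_mul_eq_mul {P Q R S : ℕ} (hQR : Q.Coprime R)
    (hPS : P.Coprime S) (hR : 0 < R) (h : P * Q + R * S + Q * S = P * R) :
    (P + S = R ∧ S + Q = P) ∨ (S + Q = R ∧ R + Q = P) := by
  obtain ⟨t, ht⟩ : R ∣ P + S :=
    hQR.symm.dvd_of_dvd_mul_left ((Nat.dvd_add_left (dvd_mul_right R S)).mp ⟨P, by linarith⟩)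
  have hP : P = S + Q * t := by
    refine (Nat.eq_of_mul_eq_mul_left hR ?_).symm
    calc R * (S + Q * t) = R * S + Q * (P + S) := by rw [ht]; ring
      _ = R * P := by linarith
  have ht2 : t ∣ 2 := by
    have h2P : t ∣ 2 * P := ⟨R + Q, by linarith⟩
    have h2S : t ∣ 2 * S := (Nat.dvd_add_left (dvd_mul_left t Q)).mp ⟨R, by linarith⟩
    simpa [Nat.gcd_mul_left, hPS] using Nat.dvd_gcd h2P h2S
  rcases (Nat.dvd_prime Nat.prime_two).mp ht2 with rfl | rfl
  · left; constructor <;> linarith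
  · right; constructor <;> linarith

theorem stmt_4
    (hFLT : ∀ m : ℕ, 3 ≤ m → ∀ x y z : ℕ, 0 < x → 0 < y → 0 < z →
      x ^ m + y ^ m ≠ z ^ m)
    (n : ℕ) (hn : 2 ≤ n) :
    ¬ ∃ X Y X' Y' : ℕ, 0 < X ∧ 0 < Y ∧ 0 < X' ∧ 0 < Y' ∧
      Nat.gcd X Y = 1 ∧ Nat.gcd X' Y' = 1 ∧
      (X : ℤ) ^ n + (Y : ℤ) ^ n = (X' : ℤ) ^ n - (Y' : ℤ) ^ n ∧
      X * Y = X' * Y' := by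
  rintro ⟨X, Y, X', Y', hX, hY, -, -, hXY, hXY', heq, hprod⟩
  obtain ⟨p, q, r, s, rfl, rfl, rfl, rfl, hqr, hps⟩ :=
    Nat.exists_mul_eq_of_mul_eq_mul hXY hXY' hprod
  have hp : 0 < p := Nat.pos_of_mul_pos_right hX
  have hq : 0 < q := Nat.pos_of_mul_pos_left hX
  have hr : 0 < r := Nat.pos_of_mul_pos_right hY
  have hs : 0 < s := Nat.pos_of_mul_pos_left hY
  have hpqrs : p ^ n * q ^ n + r ^ n * s ^ n + q ^ n * s ^ n = p ^ n * r ^ n := by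
    zify
    push_cast [mul_pow] at heq
    linarith
  rcases Nat.add_eq_of_mul_add_mul_add_mul_eq_mul (hqr.pow n n) (hps.pow n n) (by positivity)
    hpqrs with ⟨h₁, h₂⟩ | ⟨h₁, h₂⟩ <;> rcases hn.eq_or_lt with rfl | hn
  · exact sq_add_sq_ne_of_sq_add_sq_eq hs hq hps h₂ h₁
  · exact hFLT n hn p s r hp hs hr h₁
  · exact sq_add_sq_ne_of_sq_add_sq_eq hq hs hqr.symm (by rw [add_comm, h₁]) h₂
  · exact hFLT n hn s q r hs hq hr h₁
end

section
/- For n ≥ 2, the equation x^n + y^n + z^n = u^n with the side condition x·y = z·u, where gcd(x,y) = 1 and gcd(z,u) = 1, has no solution in positive integers. -/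
/-!
Writing `x = ab`, `y = cd`, `z = ac`, `u = bd` with `a ⊥ d` and `b ⊥ c`, the equation becomes
`aⁿ (bⁿ + cⁿ) = dⁿ (bⁿ - cⁿ)`, so `bⁿ + cⁿ = k dⁿ` and `bⁿ - cⁿ = k aⁿ` with `k ∣ 2`. For
`k = 1` and `k = 2` this gives `Xⁿ = Yⁿ + Zⁿ` and `Wⁿ = Xⁿ + Yⁿ` in positive integers. For
`n ≥ 3` the first equation contradicts Fermat's Last Theorem; for `n = 2` the two together give
`X⁴ - Y⁴ = (ZW)²`, which Fermat's descent rules out.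
-/

-- Nontrivial solutions of `x⁴ - y⁴ = z²`, which Fermat's right triangle theorem rules out.
def FermatRightTriangle (x y z : ℤ) : Prop :=
  y ≠ 0 ∧ z ≠ 0 ∧ x ^ 4 = y ^ 4 + z ^ 2

theorem Int.emod_two_eq_one_of_isCoprime {a b : ℤ} (h : IsCoprime a b) (ha : 2 ∣ a) :
    b % 2 = 1 := by
  rw [← Int.odd_iff, ← Int.not_even_iff_odd, even_iff_two_dvd]
  intro hb
  have := h.isUnit_of_dvd' ha hb
  norm_num [Int.isUnit_iff] at this

theorem Int.exists_sq_eq_pow_four_of_isCoprime {a b c : ℤ} (h : IsCoprime a b)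
    (heq : a * b = c ^ 2) : ∃ a₀ : ℤ, a ^ 2 = a₀ ^ 4 := by
  obtain ⟨a₀, rfl | rfl⟩ := Int.sq_of_isCoprime h heq <;> exact ⟨a₀, by ring⟩

theorem exists_fermatRightTriangle_of_sq_eq {X t s : ℤ}
    (hX : X ^ 2 = (t ^ 2) ^ 2 + (2 * s ^ 2) ^ 2) (hts : IsCoprime (t ^ 2) (2 * s ^ 2))
    (hs : s ≠ 0) : ∃ P Q, FermatRightTriangle P Q t ∧ P ^ 2 < X ^ 2 := by
  -- `(t², 2s², |X|)` is primitive, so `t² = p² - q²` with `pq = s²` forcing `p² = P⁴`, `q² = Q⁴`.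
  have ht : PythagoreanTriple (t ^ 2) (2 * s ^ 2) |X| := by
    unfold PythagoreanTriple; rw [abs_mul_abs_self]; linear_combination -hX
  have hX0 : 0 < |X| := by
    apply abs_pos.mpr; rintro rfl
    have : 0 < (2 * s ^ 2) ^ 2 := by positivity
    nlinarith [sq_nonneg (t ^ 2)]
  have htodd : t ^ 2 % 2 = 1 := Int.emod_two_eq_one_of_isCoprime hts.symm (dvd_mul_right 2 _)
  obtain ⟨p, q, ht2, hs2, hX', hpq, -, -⟩ :=
    ht.coprime_classification' (Int.isCoprime_iff_gcd_eq_one.mp hts) htodd hX0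
  have hpq' : p * q = s ^ 2 := by linarith
  have hcop := Int.isCoprime_iff_gcd_eq_one.mpr hpq
  obtain ⟨P, hP⟩ := Int.exists_sq_eq_pow_four_of_isCoprime hcop hpq'
  obtain ⟨Q, hQ⟩ := Int.exists_sq_eq_pow_four_of_isCoprime hcop.symm (by rwa [mul_comm])
  have hq : q ≠ 0 := by rintro rfl; simp_all
  refine ⟨P, Q, ⟨?_, ?_, ?_⟩, ?_⟩
  · rintro rfl; simp_all
  · rintro rfl; simp at htodd
  · linear_combination -hP + hQ - ht2
  · calc P ^ 2 ≤ (P ^ 2) ^ 2 := Int.le_self_sq _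
      _ = p ^ 2 := by rw [hP]; ring
      _ < p ^ 2 + q ^ 2 := lt_add_of_pos_right _ (by positivity)
      _ = |X| := hX'.symm
      _ ≤ X ^ 2 := by rw [← sq_abs]; exact Int.le_self_sq _

theorem exists_sq_add_sq_eq_of_mul_eq_two_mul_sq {m n w : ℤ} (hmn : IsCoprime m n) (hm : 2 ∣ m)
    (h : m * n = 2 * w ^ 2) (hw : w ≠ 0) :
    ∃ s t, s ≠ 0 ∧ m ^ 2 + n ^ 2 = (t ^ 2) ^ 2 + (2 * s ^ 2) ^ 2 ∧
      IsCoprime (t ^ 2) (2 * s ^ 2) := by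
  obtain ⟨m', rfl⟩ := hm
  have h' : m' * n = w ^ 2 := by linarith
  obtain ⟨s, hs⟩ := Int.exists_sq_eq_pow_four_of_isCoprime
    (hmn.of_isCoprime_of_dvd_left (dvd_mul_left m' 2)) h'
  obtain ⟨t, ht⟩ := Int.exists_sq_eq_pow_four_of_isCoprime
    (hmn.symm.of_isCoprime_of_dvd_right (dvd_mul_left m' 2)) (by rwa [mul_comm])
  have hm2 : (2 * m') ^ 2 = (2 * s ^ 2) ^ 2 := by linear_combination 4 * hs
  have hn2 : n ^ 2 = (t ^ 2) ^ 2 := by linear_combination ht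
  refine ⟨s, t, ?_, by rw [hm2, hn2, add_comm], ?_⟩
  · rintro rfl
    simp_all
  · rw [← IsCoprime.pow_iff two_pos two_pos, ← hm2, ← hn2]
    exact (IsCoprime.pow_iff two_pos two_pos).mpr hmn.symm

namespace FermatRightTriangle

variable {x y z : ℤ}

theorem exists_isCoprime (h : FermatRightTriangle x y z) :
    ∃ x' y' z', FermatRightTriangle x' y' z' ∧ IsCoprime x' y' ∧ x' ^ 2 ≤ x ^ 2 := by
  obtain ⟨hy, hz, heq⟩ := h
  obtain ⟨g, x', y', hg, hxy', rfl, rfl⟩ :=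
    Int.exists_gcd_one' (Int.gcd_pos_of_ne_zero_right x hy)
  have hg0 : (g : ℤ) ≠ 0 := by positivity
  obtain ⟨z', rfl⟩ : (g : ℤ) ^ 2 ∣ z := by
    rw [← Int.pow_dvd_pow_iff two_ne_zero]
    exact ⟨x' ^ 4 - y' ^ 4, by linear_combination -heq⟩
  refine ⟨x', y', z', ⟨?_, ?_, ?_⟩, Int.isCoprime_iff_gcd_eq_one.mpr hxy', ?_⟩
  · rintro rfl; simp at hy
  · rintro rfl; simp at hz
  · have : (g : ℤ) ^ 4 ≠ 0 := by positivity
    apply mul_left_cancel₀ this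
    linear_combination heq
  · have : (1 : ℤ) ≤ g := by exact_mod_cast hg
    rw [mul_pow]
    exact le_mul_of_one_le_right (sq_nonneg x') (one_le_pow₀ this)

theorem isCoprime_sq_left (h : FermatRightTriangle x y z) (hxy : IsCoprime x y) :
    IsCoprime (y ^ 2) z := by
  have := ((IsCoprime.pow_iff four_pos four_pos).mpr hxy.symm).add_mul_left_right (-1)
  rw [h.2.2, show y ^ 4 + z ^ 2 + y ^ 4 * -1 = z ^ 2 by ring,
    show y ^ 4 = (y ^ 2) ^ 2 by ring] at this
  exact (IsCoprime.pow_iff two_pos two_pos).mp this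

theorem ne_zero (h : FermatRightTriangle x y z) : x ≠ 0 := by
  obtain ⟨hy, -, heq⟩ := h
  rintro rfl
  have : 0 < y ^ 4 := by positivity
  nlinarith [sq_nonneg z]

theorem exists_lt_of_odd (h : FermatRightTriangle x y z) (hyz : IsCoprime (y ^ 2) z)
    (hy : Odd y) : ∃ x' y' z', FermatRightTriangle x' y' z' ∧ x' ^ 2 < x ^ 2 := by
  -- `y² = m² - n²` and `x² = m² + n²` multiply to `m⁴ - n⁴ = (xy)²`.
  have hx := h.ne_zero
  obtain ⟨hy0, hz0, heq⟩ := h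
  have ht : PythagoreanTriple (y ^ 2) z (x ^ 2) := by
    unfold PythagoreanTriple; linear_combination -heq
  obtain ⟨m, n, hy2, rfl, hx2, -, -, -⟩ := ht.coprime_classification'
    (Int.isCoprime_iff_gcd_eq_one.mp hyz) (Int.odd_iff.mp hy.pow) (by positivity)
  have hn : n ≠ 0 := by rintro rfl; simp at hz0
  refine ⟨m, n, x * y, ⟨hn, mul_ne_zero hx hy0, ?_⟩, ?_⟩
  · linear_combination -x ^ 2 * hy2 - (m ^ 2 - n ^ 2) * hx2
  · rw [hx2]; exact lt_add_of_pos_right _ (by positivity)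

theorem exists_lt_of_even (h : FermatRightTriangle x y z) (hyz : IsCoprime (y ^ 2) z)
    (hy : Even y) : ∃ x' y' z', FermatRightTriangle x' y' z' ∧ x' ^ 2 < x ^ 2 := by
  -- `y² = 2mn` with `m ⊥ n` makes the even one of `m, n` twice a square and the other a square.
  have hx := h.ne_zero
  obtain ⟨hy0, -, heq⟩ := h
  have ht : PythagoreanTriple z (y ^ 2) (x ^ 2) := by
    unfold PythagoreanTriple; linear_combination -heq
  have hzodd : z % 2 = 1 := Int.emod_two_eq_one_of_isCoprime hyz (hy.two_dvd.pow two_ne_zero)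
  obtain ⟨m, n, -, hy2, hx2, hmn, hpar, -⟩ := ht.coprime_classification'
    (Int.isCoprime_iff_gcd_eq_one.mp hyz.symm) hzodd (by positivity)
  obtain ⟨w, rfl⟩ := hy
  have hmn' : m * n = 2 * w ^ 2 := by linarith
  have hw : w ≠ 0 := by rintro rfl; simp at hy0
  have hcop := Int.isCoprime_iff_gcd_eq_one.mpr hmn
  obtain ⟨s, t, hs, hsum, hts⟩ : ∃ s t, s ≠ 0 ∧ m ^ 2 + n ^ 2 = (t ^ 2) ^ 2 + (2 * s ^ 2) ^ 2 ∧
      IsCoprime (t ^ 2) (2 * s ^ 2) := by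
    rcases hpar with ⟨hm, -⟩ | ⟨-, hn⟩
    · exact exists_sq_add_sq_eq_of_mul_eq_two_mul_sq hcop (Int.dvd_of_emod_eq_zero hm) hmn' hw
    · rw [add_comm]
      exact exists_sq_add_sq_eq_of_mul_eq_two_mul_sq hcop.symm (Int.dvd_of_emod_eq_zero hn)
        (by rwa [mul_comm]) hw
  obtain ⟨P, Q, hPQ, hlt⟩ := exists_fermatRightTriangle_of_sq_eq (hx2.trans hsum) hts hs
  exact ⟨P, Q, t, hPQ, hlt⟩

theorem exists_lt (h : FermatRightTriangle x y z) :
    ∃ x' y' z', FermatRightTriangle x' y' z' ∧ x' ^ 2 < x ^ 2 := by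
  obtain ⟨x', y', z', h', hcop, hle⟩ := h.exists_isCoprime
  have hyz := h'.isCoprime_sq_left hcop
  obtain ⟨x'', y'', z'', h'', hlt⟩ :=
    (Int.even_or_odd y').elim (h'.exists_lt_of_even hyz) (h'.exists_lt_of_odd hyz)
  exact ⟨x'', y'', z'', h'', hlt.trans_le hle⟩

end FermatRightTriangle

theorem not_fermatRightTriangle (x y z : ℤ) : ¬ FermatRightTriangle x y z := by
  induction h : x.natAbs using Nat.strong_induction_on generalizing x y z with
  | _ k ih =>
    intro hxyz
    obtain ⟨x', y', z', h', hlt⟩ := hxyz.exists_lt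
    exact ih _ (h ▸ Int.natAbs_lt_iff_sq_lt.mpr hlt) x' y' z' rfl h'

theorem exists_eq_mul_of_mul_eq_mul {α : Type*} [CommMonoidWithZero α] [IsLeftCancelMulZero α]
    [DecompositionMonoid α] {x y z u : α} (hz : z ≠ 0) (h : x * y = z * u) :
    ∃ a b c d, x = a * b ∧ y = c * d ∧ z = a * c ∧ u = b * d := by
  obtain ⟨a, c, ⟨b, rfl⟩, ⟨d, rfl⟩, rfl⟩ := exists_dvd_and_dvd_of_dvd_mul (Dvd.intro u h.symm)
  exact ⟨a, b, c, d, rfl, rfl, rfl, mul_left_cancel₀ hz (by rw [← h, mul_mul_mul_comm])⟩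

theorem Nat.eq_add_and_eq_add_of_mul_add_mul_add_mul_eq_mul {A B C D : ℕ} (hD : 0 < D)
    (hAD : A.Coprime D) (hBC : B.Coprime C) (h : A * B + C * D + A * C = B * D) :
    (B = A + C ∧ D = B + C) ∨ (D = A + C ∧ B = D + A) := by
  have h' : A * (B + C) + C * D = B * D := by linear_combination h
  obtain ⟨k, hk⟩ : D ∣ B + C := by
    refine hAD.symm.dvd_of_dvd_mul_left ((Nat.dvd_add_left (dvd_mul_left D C)).mp ?_)
    exact ⟨B, by rw [h', mul_comm]⟩
  have hB : B = A * k + C :=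
    (Nat.eq_of_mul_eq_mul_left hD (by linear_combination h' - A * hk)).symm
  have hk2 : k ∣ 2 := by
    have h2 : k ∣ Nat.gcd (2 * B) (2 * C) :=
      Nat.dvd_gcd ⟨D + A, by linear_combination hk + hB⟩
        ((Nat.dvd_add_right (dvd_mul_left k A)).mp ⟨D, by linear_combination hk - hB⟩)
    rwa [Nat.gcd_mul_left, hBC, mul_one] at h2
  have hk0 : k ≠ 0 := by
    rintro rfl
    obtain ⟨rfl, rfl⟩ : B = 0 ∧ C = 0 := by omega
    simp at hBC
  have := Nat.le_of_dvd two_pos hk2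
  interval_cases k <;> omega

theorem not_sq_eq_sq_add_sq_and_sq_eq_sq_add_sq {X Y Z W : ℕ} (hY : 0 < Y) (hZ : 0 < Z)
    (hW : 0 < W) : ¬ (X ^ 2 = Y ^ 2 + Z ^ 2 ∧ W ^ 2 = X ^ 2 + Y ^ 2) := by
  rintro ⟨h1, h2⟩
  apply not_fermatRightTriangle X Y (Z * W)
  refine ⟨by positivity, by positivity, ?_⟩
  have h1' : (X : ℤ) ^ 2 = Y ^ 2 + Z ^ 2 := by exact_mod_cast h1
  have h2' : (W : ℤ) ^ 2 = X ^ 2 + Y ^ 2 := by exact_mod_cast h2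
  linear_combination ((X : ℤ) ^ 2 + Y ^ 2) * h1' - (Z : ℤ) ^ 2 * h2'

theorem stmt_5
    (hFLT : ∀ m : ℕ, 3 ≤ m → ∀ x y z : ℕ, 0 < x → 0 < y → 0 < z →
      x ^ m + y ^ m ≠ z ^ m)
    (n : ℕ) (hn : 2 ≤ n) :
    ¬ ∃ x y z u : ℕ, 0 < x ∧ 0 < y ∧ 0 < z ∧ 0 < u ∧
      Nat.gcd x y = 1 ∧ Nat.gcd z u = 1 ∧
      x * y = z * u ∧
      x ^ n + y ^ n + z ^ n = u ^ n := by
  rintro ⟨x, y, z, u, hx, hy, hz, -, hxy, -, hmul, heq⟩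
  obtain ⟨a, b, c, d, rfl, rfl, rfl, rfl⟩ := exists_eq_mul_of_mul_eq_mul hz.ne' hmul
  obtain ⟨ha, hb⟩ := CanonicallyOrderedAdd.mul_pos.mp hx
  obtain ⟨hc, hd⟩ := CanonicallyOrderedAdd.mul_pos.mp hy
  have had : a.Coprime d := Nat.Coprime.coprime_mul_right hxy |>.coprime_mul_left_right
  have hbc : b.Coprime c := Nat.Coprime.coprime_mul_left hxy |>.coprime_mul_right_right
  obtain ⟨X, Y, Z, W, hX, hY, hZ, hW, h1, h2⟩ : ∃ X Y Z W : ℕ, 0 < X ∧ 0 < Y ∧ 0 < Z ∧ 0 < W ∧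
      X ^ n = Y ^ n + Z ^ n ∧ W ^ n = X ^ n + Y ^ n := by
    rcases Nat.eq_add_and_eq_add_of_mul_add_mul_add_mul_eq_mul (pow_pos hd n) (had.pow n n)
      (hbc.pow n n) (by simpa only [mul_pow] using heq) with ⟨h1, h2⟩ | ⟨h1, h2⟩
    · exact ⟨b, c, a, d, hb, hc, ha, hd, by rw [h1, add_comm], h2⟩
    · exact ⟨d, a, c, b, hd, ha, hc, hb, h1, h2⟩
  rcases (by omega : n = 2 ∨ 3 ≤ n) with rfl | h3
  · exact not_sq_eq_sq_add_sq_and_sq_eq_sq_add_sq hY hZ hW ⟨h1, h2⟩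
  · exact hFLT n h3 Y Z X hY hZ hX h1.symm
end

section
/- Let a, b, c, n be positive integers with a·b = c and gcd(a,b) = 1. If a·b is odd and n ≥ 1, then the polynomial x^2 + (a^n + b^n)·x - c^n is irreducible over ℚ. -/
/-!
By the integral root theorem a rational root of the monic integer quadratic
`X ^ 2 + (u + v) X - u v`, with `u = a ^ n` and `v = b ^ n`, is an integer, and a monic quadratic
without roots is irreducible. For odd `u` and `v` there is no integer root, already modulo `4`.
-/

open Polynomial

namespace Polynomial

theorem monic_X_sq_add_C_mul_X_sub_C {R : Type*} [CommRing R] [Nontrivial R] (s t : R) :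
    (X ^ 2 + C s * X - C t).Monic ∧ (X ^ 2 + C s * X - C t).natDegree = 2 := by
  have h : X ^ 2 + C s * X - C t = C 1 * X ^ 2 + C s * X + C (-t) := by
    simp [sub_eq_add_neg]
  rw [h]
  exact ⟨leadingCoeff_quadratic one_ne_zero, natDegree_quadratic one_ne_zero⟩

variable {A K : Type*} [CommRing A] [IsDomain A] [UniqueFactorizationMonoid A]
  [Field K] [Algebra A K] [IsFractionRing A K]

theorem Monic.irreducible_map_of_forall_not_isRoot {p : A[X]} (hp : p.Monic)
    (hp2 : 2 ≤ p.natDegree) (hp3 : p.natDegree ≤ 3) (hroot : ∀ a : A, ¬ p.IsRoot a) :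
    Irreducible (p.map (algebraMap A K)) := by
  have hinj : Function.Injective (algebraMap A K) := IsFractionRing.injective A K
  rw [(hp.map _).irreducible_iff_roots_eq_zero_of_degree_le_three
    (by rwa [natDegree_map_eq_of_injective hinj]) (by rwa [natDegree_map_eq_of_injective hinj])]
  refine Multiset.eq_zero_of_forall_notMem fun r hr => ?_
  have hr : aeval r p = 0 := by
    rwa [mem_roots (hp.map _).ne_zero, IsRoot, eval_map_algebraMap] at hr
  obtain ⟨a, rfl, -⟩ := exists_integer_of_is_root_of_monic hp hr
  exact hroot a (by rwa [aeval_algebraMap_apply, map_eq_zero_iff _ hinj] at hr)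

end Polynomial

theorem Int.sq_add_mul_sub_mul_ne_zero_of_odd {u v : ℤ} (hu : Odd u) (hv : Odd v) (m : ℤ) :
    m ^ 2 + (u + v) * m - u * v ≠ 0 := by
  obtain ⟨i, rfl⟩ := hu
  obtain ⟨j, rfl⟩ := hv
  intro h
  have h4 := congrArg (Int.cast : ℤ → ZMod 4) h
  push_cast at h4
  -- the left side is odd for even `m` and `≡ 2 [ZMOD 4]` for odd `m`
  have key : ∀ x y z : ZMod 4,
      x ^ 2 + (2 * y + 1 + (2 * z + 1)) * x - (2 * y + 1) * (2 * z + 1) ≠ 0 := by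
    decide
  exact key _ _ _ h4

theorem stmt_6_general (a b c n : ℕ)
    (hab : a * b = c) (hodd : Odd (a * b)) :
    Irreducible (X ^ 2 + C ((a : ℚ) ^ n + (b : ℚ) ^ n) * X - C ((c : ℚ) ^ n)) := by
  set p : ℤ[X] := X ^ 2 + C ((a : ℤ) ^ n + (b : ℤ) ^ n) * X - C ((a : ℤ) ^ n * (b : ℤ) ^ n)
  have hmap : X ^ 2 + C ((a : ℚ) ^ n + (b : ℚ) ^ n) * X - C ((c : ℚ) ^ n)
      = p.map (algebraMap ℤ ℚ) := by
    subst hab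
    simp [p, mul_pow]
  obtain ⟨hp, hdeg⟩ := monic_X_sq_add_C_mul_X_sub_C ((a : ℤ) ^ n + (b : ℤ) ^ n)
    ((a : ℤ) ^ n * (b : ℤ) ^ n)
  obtain ⟨hoa, hob⟩ := Nat.odd_mul.mp hodd
  have hu : Odd ((a : ℤ) ^ n) := by exact_mod_cast hoa.pow
  have hv : Odd ((b : ℤ) ^ n) := by exact_mod_cast hob.pow
  rw [hmap]
  refine hp.irreducible_map_of_forall_not_isRoot hdeg.ge (hdeg.trans_le (by norm_num)) fun m hm => ?_
  exact Int.sq_add_mul_sub_mul_ne_zero_of_odd hu hv m (by simpa [p] using hm)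

theorem stmt_6 (a b c n : ℕ) (ha : 0 < a) (hb : 0 < b) (hc : 0 < c) (hn : 1 ≤ n)
    (hab : a * b = c) (hcop : Nat.gcd a b = 1) (hodd : Odd (a * b)) :
    Irreducible (X ^ 2 + C ((a : ℚ) ^ n + (b : ℚ) ^ n) * X - C ((c : ℚ) ^ n)) :=
  stmt_6_general a b c n hab hodd
end

section
/- For n > 2, the system x₁³ + x₂³ + x₃³ + 3·x₄ⁿ = 0 together with (x₁ + x₂ + x₃)·x₄ = 0, where x₁, x₂, x₃ are pairwise coprime and x₁·x₂·x₃ ≠ 0, has no integer solutions, assuming Fermat's Last Theorem for exponent n. -/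
/-!
If `x₄ = 0` the system says `x₁³ + x₂³ + x₃³ = 0`, excluded by Fermat for exponent 3.
Otherwise `x₁ + x₂ + x₃ = 0`, so `x₁³ + x₂³ + x₃³ = 3 x₁ x₂ x₃` and `x₁ x₂ x₃ = -x₄ⁿ`.
Since the `xᵢ` are pairwise coprime, each `|xᵢ|` is an `n`-th power; and as three integers
summing to zero, the largest `|xᵢ|` is the sum of the other two: a solution of Fermat's
equation for exponent `n`.
-/

theorem pow_three_add_pow_three_add_pow_three_of_add_add_eq_zero {R : Type*} [CommRing R]
    {a b c : R} (h : a + b + c = 0) : a ^ 3 + b ^ 3 + c ^ 3 = 3 * (a * b * c) := by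
  obtain rfl : c = -(a + b) := by linear_combination h
  ring

theorem Int.natAbs_add_natAbs_of_add_add_eq_zero {x y z : ℤ} (h : x + y + z = 0) :
    x.natAbs + y.natAbs = z.natAbs ∨ x.natAbs + z.natAbs = y.natAbs ∨
      y.natAbs + z.natAbs = x.natAbs := by
  omega

theorem Int.exists_natAbs_eq_pow_of_associated_pow_mul {a b c : ℤ} {n : ℕ} (hab : IsCoprime a b)
    (h : Associated (c ^ n) (a * b)) : ∃ d : ℕ, a.natAbs = d ^ n := by
  obtain ⟨d, hd⟩ := exists_associated_pow_of_associated_pow_mul hab h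
  exact ⟨d.natAbs, by rw [← Int.associated_iff_natAbs.mp hd, Int.natAbs_pow]⟩

theorem FermatLastTheoremFor.not_coprime_add_add_eq_zero_of_associated_pow_mul {n : ℕ}
    (hF : FermatLastTheoremFor n) (hn : n ≠ 0) {x y z w : ℤ}
    (hxy : IsCoprime x y) (hxz : IsCoprime x z) (hyz : IsCoprime y z)
    (hx : x ≠ 0) (hy : y ≠ 0) (hz : z ≠ 0) (hsum : x + y + z = 0)
    (hprod : Associated (w ^ n) (x * y * z)) : False := by
  obtain ⟨a, ha⟩ := Int.exists_natAbs_eq_pow_of_associated_pow_mul (hxy.mul_right hxz)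
    (by rwa [← mul_assoc])
  obtain ⟨b, hb⟩ := Int.exists_natAbs_eq_pow_of_associated_pow_mul (hxy.symm.mul_right hyz)
    (by rwa [show y * (x * z) = x * y * z by ring])
  obtain ⟨c, hc⟩ := Int.exists_natAbs_eq_pow_of_associated_pow_mul (hxz.symm.mul_right hyz.symm)
    (by rwa [show z * (x * y) = x * y * z by ring])
  have root_ne_zero {t : ℤ} {d : ℕ} (ht : t ≠ 0) (hd : t.natAbs = d ^ n) : d ≠ 0 :=
    ne_zero_pow hn (hd ▸ Int.natAbs_ne_zero.mpr ht)
  have ha₀ := root_ne_zero hx ha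
  have hb₀ := root_ne_zero hy hb
  have hc₀ := root_ne_zero hz hc
  rcases Int.natAbs_add_natAbs_of_add_add_eq_zero hsum with h | h | h
  · exact hF a b c ha₀ hb₀ hc₀ (by rw [← ha, ← hb, ← hc, h])
  · exact hF a c b ha₀ hc₀ hb₀ (by rw [← ha, ← hb, ← hc, h])
  · exact hF b c a hb₀ hc₀ ha₀ (by rw [← ha, ← hb, ← hc, h])

theorem stmt_9 (n : ℕ) (hn : 2 < n)
    (hFLT : ∀ a b c : ℕ, 0 < a → 0 < b → 0 < c → a ^ n + b ^ n ≠ c ^ n) :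
    ¬ ∃ x₁ x₂ x₃ x₄ : ℤ,
      IsCoprime x₁ x₂ ∧ IsCoprime x₁ x₃ ∧ IsCoprime x₂ x₃ ∧
      x₁ * x₂ * x₃ ≠ 0 ∧
      x₁ ^ 3 + x₂ ^ 3 + x₃ ^ 3 + 3 * x₄ ^ n = 0 ∧
      (x₁ + x₂ + x₃) * x₄ = 0 := by
  rintro ⟨x₁, x₂, x₃, x₄, h₁₂, h₁₃, h₂₃, hne, heq, hz⟩
  obtain ⟨⟨h₁, h₂⟩, h₃⟩ : (x₁ ≠ 0 ∧ x₂ ≠ 0) ∧ x₃ ≠ 0 := by simpa only [mul_ne_zero_iff] using hne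
  have hn₀ : n ≠ 0 := by omega
  rcases mul_eq_zero.mp hz with hsum | rfl
  · have hF : FermatLastTheoremFor n := fun a b c ha hb hc ↦
      hFLT a b c (Nat.pos_of_ne_zero ha) (Nat.pos_of_ne_zero hb) (Nat.pos_of_ne_zero hc)
    have hprod : x₁ * x₂ * x₃ = -x₄ ^ n := mul_left_cancel₀ three_ne_zero <| by
      linear_combination heq - pow_three_add_pow_three_add_pow_three_of_add_add_eq_zero hsum
    exact hF.not_coprime_add_add_eq_zero_of_associated_pow_mul hn₀ h₁₂ h₁₃ h₂₃ h₁ h₂ h₃ hsum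
      (hprod ▸ (Associated.refl _).neg_right)
  · rw [zero_pow hn₀, mul_zero, add_zero] at heq
    exact fermatLastTheoremFor_iff_int.mp fermatLastTheoremThree x₁ x₂ (-x₃) h₁ h₂
      (neg_ne_zero.mpr h₃) (by linear_combination heq)
end

section
/- The equation x₁·x₂·(x₁ + x₂) = x₃⁴ has no solutions in nonzero integers x₁, x₂, x₃ with gcd(x₁, x₂) = 1. -/
/-!
If `gcd(x₁, x₂) = 1` then `x₁`, `x₂` and `x₁ + x₂` are pairwise coprime, and each of them times a
coprime cofactor is the fourth power `x₃⁴`, so each is `± d⁴`. Whatever the signs, the identity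
`x₁ + x₂ = (x₁ + x₂)` then rearranges into a sum of positive fourth powers being negative or into
`a⁴ + b⁴ = c⁴` in nonzero integers, which Fermat's theorem for exponent 4 excludes.
-/

theorem Int.exists_eq_pow_or_eq_neg_pow_of_mul_eq_pow {a b c : ℤ} (hab : IsCoprime a b) {k : ℕ}
    (h : a * b = c ^ k) : ∃ d, a = d ^ k ∨ a = -d ^ k :=
  let ⟨d, hd⟩ := exists_associated_pow_of_mul_eq_pow' hab h
  ⟨d, Int.associated_iff.mp hd.symm⟩

theorem Int.add_ne_of_eq_pm_fourth_powers {x y z a b c : ℤ} (hx₀ : x ≠ 0) (hy₀ : y ≠ 0)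
    (hz₀ : z ≠ 0) (hx : x = a ^ 4 ∨ x = -a ^ 4) (hy : y = b ^ 4 ∨ y = -b ^ 4)
    (hz : z = c ^ 4 ∨ z = -c ^ 4) : x + y ≠ z := by
  have ha : a ≠ 0 := by rintro rfl; simp_all
  have hb : b ≠ 0 := by rintro rfl; simp_all
  have hc : c ≠ 0 := by rintro rfl; simp_all
  have ha₄ : 0 < a ^ 4 := even_two_mul 2 |>.pow_pos ha
  have hb₄ : 0 < b ^ 4 := even_two_mul 2 |>.pow_pos hb
  have hc₄ : 0 < c ^ 4 := even_two_mul 2 |>.pow_pos hc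
  have flt : FermatLastTheoremWith ℤ 4 := fermatLastTheoremFor_iff_int.mp fermatLastTheoremFour
  rcases hx with rfl | rfl <;> rcases hy with rfl | rfl <;> rcases hz with rfl | rfl <;> intro h
  all_goals first
    | linarith
    | exact flt a b c ha hb hc (by linarith)
    | exact flt a c b ha hc hb (by linarith)
    | exact flt b c a hb hc ha (by linarith)

theorem stmt_11 :
    ¬ ∃ x₁ x₂ x₃ : ℤ, x₁ ≠ 0 ∧ x₂ ≠ 0 ∧ x₃ ≠ 0 ∧
      Int.gcd x₁ x₂ = 1 ∧ x₁ * x₂ * (x₁ + x₂) = x₃ ^ 4 := by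
  rintro ⟨x₁, x₂, x₃, h₁, h₂, h₃, hgcd, h⟩
  have h₁₂ : x₁ + x₂ ≠ 0 := by
    rintro h₀
    exact h₃ (by simpa [h₀] using h.symm)
  have hco : IsCoprime x₁ x₂ := Int.isCoprime_iff_gcd_eq_one.mpr hgcd
  have hco₁ : IsCoprime x₁ (x₁ + x₂) := by simpa using hco.mul_add_left_right 1
  have hco₂ : IsCoprime x₂ (x₁ + x₂) := by simpa using hco.symm.add_mul_left_right 1
  obtain ⟨a, ha⟩ := Int.exists_eq_pow_or_eq_neg_pow_of_mul_eq_pow (c := x₃)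
    (hco.mul_right hco₁) (by rw [← h]; ring)
  obtain ⟨b, hb⟩ := Int.exists_eq_pow_or_eq_neg_pow_of_mul_eq_pow (c := x₃)
    (hco.symm.mul_right hco₂) (by rw [← h]; ring)
  obtain ⟨c, hc⟩ := Int.exists_eq_pow_or_eq_neg_pow_of_mul_eq_pow (c := x₃)
    (hco₁.symm.mul_right hco₂.symm) (by rw [← h]; ring)
  exact Int.add_ne_of_eq_pm_fourth_powers h₁ h₂ h₁₂ ha hb hc rfl
end

section
/- Fermat's Last Theorem for exponent n > 2 is equivalent to the statement: there are no positive integers x₁, x₂, x₃ with gcd(x₁, x₂) = 1 and x₁·x₂·(x₁ + x₂) = x₃ⁿ. -/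
/-!
If `x₁ * x₂ * (x₁ + x₂)` is an `n`-th power with `x₁, x₂` coprime, then its three factors are
pairwise coprime, hence each is an `n`-th power, and `x₁ + x₂ = r ^ n` is a Fermat solution.
Conversely a Fermat solution may be divided by `gcd a b` (which then also divides `c`), and a
coprime solution gives `aⁿ * bⁿ * (aⁿ + bⁿ) = (a * b * c) ^ n`.
-/

namespace Nat

theorem Coprime.exists_eq_pow_of_mul_eq_pow {a b c n : ℕ} (hab : a.Coprime b)
    (h : a * b = c ^ n) : ∃ d, a = d ^ n :=
  _root_.exists_eq_pow_of_mul_eq_pow (Nat.isUnit_iff.mpr hab) h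

theorem exists_pow_add_pow_eq_pow_of_mul_mul_add_eq_pow {n x₁ x₂ x₃ : ℕ} (hn : n ≠ 0)
    (h₁ : 0 < x₁) (h₂ : 0 < x₂) (hco : x₁.Coprime x₂) (h : x₁ * x₂ * (x₁ + x₂) = x₃ ^ n) :
    ∃ p q r : ℕ, 0 < p ∧ 0 < q ∧ 0 < r ∧ p ^ n + q ^ n = r ^ n := by
  have hsum : (x₁ * x₂).Coprime (x₁ + x₂) :=
    Coprime.mul_left (coprime_self_add_right.mpr hco) (coprime_add_self_right.mpr hco.symm)
  obtain ⟨s, hs⟩ := hsum.exists_eq_pow_of_mul_eq_pow h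
  obtain ⟨r, hr⟩ := hsum.symm.exists_eq_pow_of_mul_eq_pow (by rw [mul_comm, h])
  obtain ⟨p, hp⟩ := hco.exists_eq_pow_of_mul_eq_pow hs
  obtain ⟨q, hq⟩ := hco.symm.exists_eq_pow_of_mul_eq_pow (by rw [mul_comm, hs])
  exact ⟨p, q, r, (pow_pos_iff hn).mp (hp ▸ h₁), (pow_pos_iff hn).mp (hq ▸ h₂),
    (pow_pos_iff hn).mp (hr ▸ Nat.add_pos_left h₁ x₂), by rw [← hp, ← hq, ← hr]⟩

theorem exists_coprime_pow_add_pow_eq_pow {n a b c : ℕ} (hn : n ≠ 0) (ha : 0 < a) (hb : 0 < b)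
    (h : a ^ n + b ^ n = c ^ n) :
    ∃ a' b' c' : ℕ, 0 < a' ∧ 0 < b' ∧ 0 < c' ∧ a'.Coprime b' ∧ a' ^ n + b' ^ n = c' ^ n := by
  obtain ⟨g, a', b', hg, hco, rfl, rfl⟩ := exists_coprime' (gcd_pos_of_pos_left b ha)
  have hgc : g ∣ c := by
    rw [← Nat.pow_dvd_pow_iff hn, ← h, mul_pow, mul_pow]
    exact dvd_add (dvd_mul_left _ _) (dvd_mul_left _ _)
  obtain ⟨c', rfl⟩ := hgc
  have ha' : 0 < a' := Nat.pos_of_mul_pos_right ha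
  have hb' : 0 < b' := Nat.pos_of_mul_pos_right hb
  have h' : a' ^ n + b' ^ n = c' ^ n := by
    rw [mul_pow, mul_pow, mul_pow, ← add_mul, mul_comm] at h
    exact Nat.eq_of_mul_eq_mul_left (pow_pos hg n) h
  have hc' : 0 < c' ^ n := h' ▸ Nat.add_pos_left (pow_pos ha' n) _
  exact ⟨a', b', c', ha', hb', (pow_pos_iff hn).mp hc', hco, h'⟩

end Nat

theorem stmt_13 (n : ℕ) (hn : 2 < n) :
    (∀ a b c : ℕ, 0 < a → 0 < b → 0 < c → a ^ n + b ^ n ≠ c ^ n) ↔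
    ¬ ∃ x₁ x₂ x₃ : ℕ, 0 < x₁ ∧ 0 < x₂ ∧ 0 < x₃ ∧
      Nat.gcd x₁ x₂ = 1 ∧ x₁ * x₂ * (x₁ + x₂) = x₃ ^ n := by
  have hn₀ : n ≠ 0 := by omega
  constructor
  · rintro hflt ⟨x₁, x₂, x₃, h₁, h₂, -, hco, h⟩
    obtain ⟨p, q, r, hp, hq, hr, hpqr⟩ :=
      Nat.exists_pow_add_pow_eq_pow_of_mul_mul_add_eq_pow hn₀ h₁ h₂ hco h
    exact hflt p q r hp hq hr hpqr
  · rintro hno a b c ha hb - h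
    obtain ⟨a', b', c', ha', hb', hc', hco, h'⟩ :=
      Nat.exists_coprime_pow_add_pow_eq_pow hn₀ ha hb h
    exact hno ⟨a' ^ n, b' ^ n, a' * b' * c', by positivity, by positivity, by positivity,
      hco.pow n n, by rw [h', mul_pow, mul_pow]⟩
end

section
/- If a monic integer polynomial p(x) = xⁿ + a_{n-2}x^{n-2} + ... + a₁x ± a₀ with a₁·a₀ ≠ 0, gcd(a₁,a₀) = 1, and constant term ±c^k (c a positive integer) splits into linear factors over ℚ, then there exist pairwise coprime positive integers x₁,...,x_h, y₁,...,y_l with h + l = n and x₁^k + ... + x_h^k = y₁^k + ... + y_l^k, where each |root| is a k-th power. -/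
/-!
By the rational root theorem the roots of `p` are integers `r i`. A common divisor of two roots
divides both `a₀ = ∏ (-r i)` and `a₁ = ∑ₐ ∏_{b ≠ a} (-r b)`, so `gcd (a₁, a₀) = 1` makes the roots
pairwise coprime. Their absolute values multiply to `c ^ k`, hence each is a `k`-th power, and the
vanishing `x ^ (n - 1)` coefficient says `∑ r i = 0`, i.e. the positive roots and the negatives of
the negative roots have the same sum.
-/

open Polynomial

namespace Polynomial

theorem Monic.exists_eq_prod_X_sub_C_of_splits_map {A K : Type*} [CommRing A]
    [IsDomain A] [UniqueFactorizationMonoid A] [Field K] [Algebra A K] [IsFractionRing A K]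
    {p : A[X]} (hp : p.Monic) (hsplit : (p.map (algebraMap A K)).Splits) :
    ∃ r : Fin p.natDegree → A, p = ∏ i, (X - C (r i)) := by
  set q := p.map (algebraMap A K)
  obtain ⟨ρ, hρ⟩ : ∃ ρ : Fin p.natDegree → K, q.roots = List.ofFn ρ := by
    rw [← hp.natDegree_map (algebraMap A K), ← splits_iff_card_roots.mp hsplit,
      ← Multiset.length_toList]
    exact ⟨_, by rw [List.ofFn_get, Multiset.coe_toList]⟩
  have hq : q = ∏ i, (X - C (ρ i)) := by
    rw [hsplit.eq_prod_roots_of_monic (hp.map _), hρ, Multiset.map_coe, Multiset.prod_coe,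
      List.map_ofFn, List.prod_ofFn]
    rfl
  have hint (i : Fin p.natDegree) : IsLocalization.IsInteger A (ρ i) := by
    refine isInteger_of_is_root_of_monic hp ?_
    have : ρ i ∈ q.roots := by simp [hρ]
    rw [aeval_def, ← eval_map]
    exact (mem_roots'.mp this).2
  choose r hr using hint
  refine ⟨r, map_injective _ (IsFractionRing.injective A K) ?_⟩
  simp_rw [Polynomial.map_prod, Polynomial.map_sub, map_X, map_C, hr]
  exact hq

section Vieta

variable {R ι : Type*} [CommRing R] (s : Finset ι) (r : ι → R)

theorem coeff_zero_prod_X_sub_C : (∏ i ∈ s, (X - C (r i))).coeff 0 = ∏ i ∈ s, -r i := by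
  simp [coeff_zero_prod]

theorem coeff_one_prod_X_sub_C [DecidableEq ι] :
    (∏ i ∈ s, (X - C (r i))).coeff 1 = ∑ a ∈ s, ∏ b ∈ s.erase a, -r b := by
  have := coeff_derivative (∏ i ∈ s, (X - C (r i))) 0
  simp only [zero_add, Nat.cast_zero, mul_one, derivative_prod_finset, derivative_sub,
    derivative_X, derivative_C, sub_zero, finsetSum_coeff, coeff_zero_prod] at this
  simp [← this]

variable {s r}

theorem dvd_coeff_zero_prod_X_sub_C {d : R} {i : ι} (hi : i ∈ s) (hdi : d ∣ r i) :
    d ∣ (∏ i ∈ s, (X - C (r i))).coeff 0 := by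
  rw [coeff_zero_prod_X_sub_C]
  exact (dvd_neg.mpr hdi).trans (Finset.dvd_prod_of_mem _ hi)

theorem dvd_coeff_one_prod_X_sub_C {d : R} {i j : ι} (hi : i ∈ s) (hj : j ∈ s) (hij : i ≠ j)
    (hdi : d ∣ r i) (hdj : d ∣ r j) : d ∣ (∏ i ∈ s, (X - C (r i))).coeff 1 := by
  classical
  rw [coeff_one_prod_X_sub_C]
  refine Finset.dvd_sum fun a _ => ?_
  -- every `s.erase a` still contains `i` or `j`
  by_cases hai : a = i
  · subst hai
    exact (dvd_neg.mpr hdj).trans <|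
      Finset.dvd_prod_of_mem _ (Finset.mem_erase.mpr ⟨hij.symm, hj⟩)
  · exact (dvd_neg.mpr hdi).trans <|
      Finset.dvd_prod_of_mem _ (Finset.mem_erase.mpr ⟨Ne.symm hai, hi⟩)

end Vieta

theorem natAbs_coeff_zero_prod_X_sub_C {ι : Type*} (s : Finset ι) (r : ι → ℤ) :
    ((∏ i ∈ s, (X - C (r i))).coeff 0).natAbs = ∏ i ∈ s, (r i).natAbs := by
  simpa only [coeff_zero_prod_X_sub_C, Int.natAbsHom_apply, Int.natAbs_neg] using
    map_prod Int.natAbsHom (fun i => -r i) s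

theorem pairwise_coprime_natAbs_of_gcd_coeff_eq_one {ι : Type*} [Fintype ι] {r : ι → ℤ}
    (hcop : Int.gcd ((∏ i, (X - C (r i))).coeff 1) ((∏ i, (X - C (r i))).coeff 0) = 1) :
    Pairwise fun i j => Nat.Coprime (r i).natAbs (r j).natAbs := by
  intro i j hij
  have h := Int.dvd_gcd (dvd_coeff_one_prod_X_sub_C (Finset.mem_univ i) (Finset.mem_univ j) hij
    (Int.gcd_dvd_left (r i) (r j)) (Int.gcd_dvd_right (r i) (r j)))
    (dvd_coeff_zero_prod_X_sub_C (Finset.mem_univ i) (Int.gcd_dvd_left (r i) (r j)))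
  rw [hcop] at h
  exact Nat.dvd_one.mp (by exact_mod_cast h)

end Polynomial

/-- Asking for `d ∣ f i`, not just `f i = d ^ k`, forces `d = 1` when `k = 0`, so that the
`k`-th roots inherit the pairwise coprimality. -/
theorem Nat.exists_dvd_and_eq_pow_of_prod_eq_pow_of_coprime {ι : Type*} [Fintype ι]
    {f : ι → ℕ} {c k : ℕ} (hf : Pairwise fun i j => Nat.Coprime (f i) (f j))
    (hprod : ∏ i, f i = c ^ k) (i : ι) : ∃ d, d ∣ f i ∧ f i = d ^ k := by
  classical
  rcases k.eq_zero_or_pos with rfl | hk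
  · have : f i ∣ c ^ 0 := hprod ▸ Finset.dvd_prod_of_mem f (Finset.mem_univ i)
    exact ⟨1, one_dvd _, by simpa using this⟩
  · have hcop : Nat.Coprime (f i) (∏ j ∈ Finset.univ.erase i, f j) :=
      Nat.Coprime.prod_right fun j hj => hf (Finset.ne_of_mem_erase hj).symm
    obtain ⟨d, hd⟩ := exists_eq_pow_of_mul_eq_pow (by rwa [Nat.isUnit_iff])
      ((Finset.mul_prod_erase _ f (Finset.mem_univ i)).trans hprod)
    exact ⟨d, hd ▸ dvd_pow_self d hk.ne', hd⟩

theorem Fintype.exists_fin_sum_fin_equiv_of_pred {ι : Type*} [Fintype ι] (P : ι → Prop)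
    [DecidablePred P] :
    ∃ (h l : ℕ) (e : Fin h ⊕ Fin l ≃ ι), (∀ a, P (e (.inl a))) ∧ ∀ b, ¬ P (e (.inr b)) :=
  ⟨_, _, (Equiv.sumCongr (Fintype.equivFin _).symm (Fintype.equivFin _).symm).trans
    (Equiv.sumCompl P), fun a => by simpa using ((Fintype.equivFin _).symm a).2,
    fun b => by simpa using ((Fintype.equivFin _).symm b).2⟩

theorem Int.exists_sign_split_of_natAbs_eq_pow {ι : Type*} [Fintype ι] (r : ι → ℤ) (g : ι → ℕ)
    {k : ℕ} (hg : ∀ i, (r i).natAbs = g i ^ k) :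
    ∃ (h l : ℕ) (x : Fin h → ℕ) (y : Fin l → ℕ) (e : Fin h ⊕ Fin l ≃ ι),
      Sum.elim x y = g ∘ e ∧ ∑ i, r i = ∑ a, (x a : ℤ) ^ k - ∑ b, (y b : ℤ) ^ k ∧
      ∏ i, (X - C (r i)) = (∏ a, (X - C ((x a : ℤ) ^ k))) * ∏ b, (X + C ((y b : ℤ) ^ k)) := by
  obtain ⟨h, l, e, hpos, hneg⟩ := Fintype.exists_fin_sum_fin_equiv_of_pred (fun i => 0 < r i)
  have hx (a : Fin h) : r (e (.inl a)) = (g (e (.inl a)) : ℤ) ^ k := by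
    rw [← Nat.cast_pow, ← hg, Int.natAbs_of_nonneg (hpos a).le]
  have hy (b : Fin l) : r (e (.inr b)) = -(g (e (.inr b)) : ℤ) ^ k := by
    rw [← Nat.cast_pow, ← hg, Int.ofNat_natAbs_of_nonpos (not_lt.mp (hneg b)), neg_neg]
  refine ⟨h, l, g ∘ e ∘ .inl, g ∘ e ∘ .inr, e, Sum.elim_comp_inl_inr (g ∘ e), ?_, ?_⟩
  · rw [← e.sum_comp, Fintype.sum_sum_type]
    simp [hx, hy, sub_eq_add_neg]
  · rw [← e.prod_comp, Fintype.prod_sum_type]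
    simp [hx, hy]

theorem stmt_15_general (n k c : ℕ) (hn : 2 ≤ n) (hc : 0 < c)
    (p : Polynomial ℤ)
    (hmonic : p.Monic) (hdeg : p.natDegree = n)
    (hcoeff : p.coeff (n - 1) = 0)
    (hcop : Int.gcd (p.coeff 1) (p.coeff 0) = 1)
    (hconst : p.coeff 0 = (c : ℤ) ^ k ∨ p.coeff 0 = -((c : ℤ) ^ k))
    (hsplit : Polynomial.Splits (p.map (Int.castRingHom ℚ))) :
    ∃ (h l : ℕ) (x : Fin h → ℕ) (y : Fin l → ℕ),
      h + l = n ∧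
      (∀ i, 0 < x i) ∧ (∀ j, 0 < y j) ∧
      (∀ i j : Fin h ⊕ Fin l, i ≠ j →
        Nat.Coprime (Sum.elim x y i) (Sum.elim x y j)) ∧
      (∑ i, (x i) ^ k) = (∑ j, (y j) ^ k) ∧
      p = (∏ i, (X - C ((x i : ℤ) ^ k))) * ∏ j, (X + C ((y j : ℤ) ^ k)) := by
  obtain ⟨r, hr⟩ : ∃ r : Fin n → ℤ, p = ∏ i, (X - C (r i)) :=
    hdeg ▸ hmonic.exists_eq_prod_X_sub_C_of_splits_map (K := ℚ) hsplit
  have hsum : ∑ i, r i = 0 := by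
    have := prod_X_sub_C_coeff_card_pred Finset.univ r (by rw [Finset.card_fin]; omega)
    rw [Finset.card_univ, Fintype.card_fin, ← hr, hcoeff] at this
    simpa using this.symm
  have hcopr := pairwise_coprime_natAbs_of_gcd_coeff_eq_one (hr ▸ hcop)
  have hprod : ∏ i, (r i).natAbs = c ^ k := by
    rw [← natAbs_coeff_zero_prod_X_sub_C, ← hr]
    rcases hconst with h | h <;> simp [h]
  choose g hgd hg using Nat.exists_dvd_and_eq_pow_of_prod_eq_pow_of_coprime hcopr hprod
  obtain ⟨h, l, x, y, e, hxy, hsum', hprod'⟩ := Int.exists_sign_split_of_natAbs_eq_pow r g hg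
  have hg0 (i) : 0 < g i := Nat.pos_of_dvd_of_pos (hgd i) <| Nat.pos_of_ne_zero <|
    Finset.prod_ne_zero_iff.mp (hprod ▸ pow_ne_zero k hc.ne') i (Finset.mem_univ i)
  refine ⟨h, l, x, y, by simpa using Fintype.card_congr e, fun a => ?_, fun b => ?_, ?_, ?_,
    hr.trans hprod'⟩
  · exact (show x a = g (e (.inl a)) from congrFun hxy (.inl a)) ▸ hg0 _
  · exact (show y b = g (e (.inr b)) from congrFun hxy (.inr b)) ▸ hg0 _
  · rw [hxy]
    intro i j hij
    exact ((hcopr (e.injective.ne hij)).coprime_dvd_left (hgd _)).coprime_dvd_right (hgd _)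
  · exact_mod_cast sub_eq_zero.mp (hsum' ▸ hsum)

theorem stmt_15 (n k c : ℕ) (hn : 2 ≤ n) (hc : 0 < c)
    (p : Polynomial ℤ)
    (hmonic : p.Monic) (hdeg : p.natDegree = n)
    (hcoeff : p.coeff (n - 1) = 0)
    (hne : p.coeff 1 * p.coeff 0 ≠ 0)
    (hcop : Int.gcd (p.coeff 1) (p.coeff 0) = 1)
    (hconst : p.coeff 0 = (c : ℤ) ^ k ∨ p.coeff 0 = -((c : ℤ) ^ k))
    (hsplit : Polynomial.Splits (p.map (Int.castRingHom ℚ))) :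
    ∃ (h l : ℕ) (x : Fin h → ℕ) (y : Fin l → ℕ),
      h + l = n ∧
      (∀ i, 0 < x i) ∧ (∀ j, 0 < y j) ∧
      (∀ i j : Fin h ⊕ Fin l, i ≠ j →
        Nat.Coprime (Sum.elim x y i) (Sum.elim x y j)) ∧
      (∑ i, (x i) ^ k) = (∑ j, (y j) ^ k) ∧
      p = (∏ i, (X - C ((x i : ℤ) ^ k))) * ∏ j, (X + C ((y j : ℤ) ^ k)) :=
  stmt_15_general n k c hn hc p hmonic hdeg hcoeff hcop hconst hsplit
end
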